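/- Let X¹, X², L̄, Ū be as follows: X¹, X² : [0,T] → [0,b] continuous with associated Skorohod conditions ∫_0^T X^i dL^i = ∫_0^T (b − X^i) dU^i = 0 for nondecreasing L^i, U^i vanishing at 0 (i = 1,2). Define dL̄_s = 1_{X¹_s ≤ 0} dL²_s and dŪ_s = 1_{X²_s < b} dU¹_s + dU²_s. Then the pair (X¹ ∨ X², L̄, Ū) again satisfies the Skorohod conditions: ∫_0^T (X¹_t ∨ X²_t) dL̄_t = 0 and ∫_0^T (b − X¹_t ∨ X²_t) dŪ_t = 0. -/

import Mathlib

/-!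
Each Skorohod condition `∫ Xⁱ dLⁱ = 0`, `∫ (b - Xⁱ) dUⁱ = 0` has a nonnegative integrand, so it says
that `Xⁱ = 0` holds `dLⁱ`-a.e. and `Xⁱ = b` holds `dUⁱ`-a.e. on `[0, T]`. Hence `dL̄`-a.e. both
`X¹ = 0` and `X² = 0`, so `X¹ ∨ X² = 0`; and `dŪ`-a.e. one of `X¹, X²` equals `b`, so `X¹ ∨ X² = b`.
-/

open Set MeasureTheory

theorem MeasureTheory.ae_restrict_Icc_eq_zero_of_setIntegral_eq_zero {μ : Measure ℝ}
    [IsLocallyFiniteMeasure μ] {f : ℝ → ℝ} (hf : Continuous f) (hf₀ : ∀ x, 0 ≤ f x) {a b : ℝ}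
    (h : ∫ x in Icc a b, f x ∂μ = 0) : ∀ᵐ x ∂μ.restrict (Icc a b), f x = 0 :=
  (integral_eq_zero_iff_of_nonneg hf₀ hf.integrableOn_Icc).mp h

theorem MeasureTheory.ae_restrict_withDensity_indicator_one_iff {α : Type*} [MeasurableSpace α]
    {μ : Measure α} {s t : Set α} (ht : MeasurableSet t) {p : α → Prop} :
    (∀ᵐ x ∂(μ.withDensity (t.indicator 1)).restrict s, p x) ↔
      ∀ᵐ x ∂μ.restrict s, x ∈ t → p x := by
  rw [withDensity_indicator_one ht, ← Measure.restrict_comm ht, ae_restrict_iff' ht]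

theorem stmt_8_general (T b : ℝ)
    (X1 X2 : ℝ → ℝ) (hX1 : Continuous X1) (hX2 : Continuous X2)
    (hX1r : ∀ s, X1 s ∈ Icc 0 b) (hX2r : ∀ s, X2 s ∈ Icc 0 b)
    (L2 U1 U2 : StieltjesFunction ℝ)
    (hSkorU1 : (∫ s in Icc 0 T, (b - X1 s) ∂U1.measure) = 0)
    (hSkorL2 : (∫ s in Icc 0 T, X2 s ∂L2.measure) = 0)
    (hSkorU2 : (∫ s in Icc 0 T, (b - X2 s) ∂U2.measure) = 0) :
    (∫ s in Icc 0 T, max (X1 s) (X2 s)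
        ∂(L2.measure.withDensity
            (Set.indicator {s | X1 s ≤ 0} (fun _ => (1 : ENNReal))))) = 0
    ∧ (∫ s in Icc 0 T, (b - max (X1 s) (X2 s))
        ∂(U1.measure.withDensity
            (Set.indicator {s | X2 s < b} (fun _ => (1 : ENNReal))) + U2.measure)) = 0 := by
  have hL2 := ae_restrict_Icc_eq_zero_of_setIntegral_eq_zero hX2 (fun s => (hX2r s).1) hSkorL2
  have hU1 := ae_restrict_Icc_eq_zero_of_setIntegral_eq_zero (f := fun s => b - X1 s)
    (continuous_const.sub hX1) (fun s => sub_nonneg.mpr (hX1r s).2) hSkorU1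
  have hU2 := ae_restrict_Icc_eq_zero_of_setIntegral_eq_zero (f := fun s => b - X2 s)
    (continuous_const.sub hX2) (fun s => sub_nonneg.mpr (hX2r s).2) hSkorU2
  refine ⟨integral_eq_zero_of_ae ?_, integral_eq_zero_of_ae ?_⟩
  · rw [Filter.EventuallyEq, ← Pi.one_def,
      ae_restrict_withDensity_indicator_one_iff (measurableSet_le hX1.measurable measurable_const)]
    filter_upwards [hL2] with s hX2s hX1s
    simp [le_antisymm hX1s (hX1r s).1, hX2s]
  · rw [Filter.EventuallyEq, ← Pi.one_def, Measure.restrict_add, ae_add_measure_iff,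
      ae_restrict_withDensity_indicator_one_iff (measurableSet_lt hX2.measurable measurable_const)]
    constructor
    · filter_upwards [hU1] with s hX1s _
      simp [(sub_eq_zero.mp hX1s).symm, (hX2r s).2]
    · filter_upwards [hU2] with s hX2s
      simp [(sub_eq_zero.mp hX2s).symm, (hX1r s).2]

/-- The pair `(X¹ ∨ X², L̄, Ū)` again satisfies the Skorohod conditions
(pathwise uniqueness step of Example 2.1). -/
theorem stmt_8 (T b : ℝ) (hT : 0 < T) (hb : 0 < b)
    (X1 X2 : ℝ → ℝ) (hX1 : Continuous X1) (hX2 : Continuous X2)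
    (hX1r : ∀ s, X1 s ∈ Icc 0 b) (hX2r : ∀ s, X2 s ∈ Icc 0 b)
    (L1 L2 U1 U2 : StieltjesFunction ℝ)
    (hSkorL1 : (∫ s in Icc 0 T, X1 s ∂L1.measure) = 0)
    (hSkorU1 : (∫ s in Icc 0 T, (b - X1 s) ∂U1.measure) = 0)
    (hSkorL2 : (∫ s in Icc 0 T, X2 s ∂L2.measure) = 0)
    (hSkorU2 : (∫ s in Icc 0 T, (b - X2 s) ∂U2.measure) = 0) :
    (∫ s in Icc 0 T, max (X1 s) (X2 s)
        ∂(L2.measure.withDensity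
            (Set.indicator {s | X1 s ≤ 0} (fun _ => (1 : ENNReal))))) = 0
    ∧ (∫ s in Icc 0 T, (b - max (X1 s) (X2 s))
        ∂(U1.measure.withDensity
            (Set.indicator {s | X2 s < b} (fun _ => (1 : ENNReal))) + U2.measure)) = 0 :=
  stmt_8_general T b X1 X2 hX1 hX2 hX1r hX2r L2 U1 U2 hSkorU1 hSkorL2 hSkorU2
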